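/- Define x*(t) = cosh(1 − t)/cosh(1), u*(t) = −x*(t)·(tanh(1 − t) + 0.5), and p*(t) = (1/2)·x*(t)·tanh(1 − t). Then for every t ∈ [0, 1], p* is differentiable at t with derivative (p*)'(t) = −(1/4)·(2.5·x*(t) + u*(t)) − 0.5·p*(t), and p*(1) = 0. -/
import Mathlib


/-- Optimal state of the LQ problem: `x*(t) = cosh(1 - t)/cosh 1`. -/
noncomputable def xStar (t : ℝ) : ℝ := Real.cosh (1 - t) / Real.cosh 1

/-- Optimal control of the LQ problem: `u*(t) = -x*(t)·(tanh(1 - t) + 0.5)`. -/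
noncomputable def uStar (t : ℝ) : ℝ := -xStar t * (Real.tanh (1 - t) + 0.5)

/-- Costate of the LQ problem: `p*(t) = (1/2)·x*(t)·tanh(1 - t)`. -/
noncomputable def pStar (t : ℝ) : ℝ := (1 / 2) * xStar t * Real.tanh (1 - t)

lemma pStar_eq : pStar = fun t : ℝ => (1 / 2) * (Real.sinh (1 - t) / Real.cosh 1) := by
  funext t
  have hc : Real.cosh (1 - t) ≠ 0 := (Real.cosh_pos _).ne'
  simp only [pStar, xStar, Real.tanh_eq_sinh_div_cosh]
  field_simp

/-- `p*` satisfies the adjoint equation `ṗ = -(1/4)(2.5·x + u) - 0.5·p` on `[0,1]`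
with `p*(1) = 0`. -/
theorem pStar_solves_adjoint_equation :
    (∀ t ∈ Set.Icc (0 : ℝ) 1,
      HasDerivAt pStar (-(1 / 4) * (2.5 * xStar t + uStar t) - 0.5 * pStar t) t) ∧
    pStar 1 = 0 := by
  constructor
  · intro t _
    have h1 : HasDerivAt (fun s : ℝ => 1 - s) (-1) t := by
      simpa using (hasDerivAt_id t).const_sub 1
    have h2 : HasDerivAt (fun s : ℝ => Real.sinh (1 - s)) (Real.cosh (1 - t) * (-1)) t :=
      (Real.hasDerivAt_sinh (1 - t)).comp t h1
    have h3 : HasDerivAt pStar ((1 / 2) * (Real.cosh (1 - t) * (-1) / Real.cosh 1)) t := by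
      rw [pStar_eq]
      exact (h2.div_const _).const_mul _
    convert h3 using 1
    have hc : Real.cosh (1 - t) ≠ 0 := (Real.cosh_pos _).ne'
    have hc1 : Real.cosh 1 ≠ 0 := (Real.cosh_pos _).ne'
    simp only [pStar, uStar, xStar, Real.tanh_eq_sinh_div_cosh]
    field_simp
    ring
  · simp [pStar, xStar]
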